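/- Let E₁ ⊆ E₂ ⊆ ⋯ be a direct sequence of locally convex spaces with continuous linear inclusions, E := ⋃_n E_n with the locally convex direct limit topology, and U_n ⊆ E_n open convex with U₁ ⊆ U₂ ⊆ ⋯ and U := ⋃_n U_n. If x ∈ U (say x ∈ U₁ after reindexing, with x = 0 after translation), p is a continuous seminorm on F, ε > 0, and q_n are continuous seminorms on E_n with p(f(z)−f(y)) ≤ q_n(z−y) for all y,z ∈ U_n, then the set V := ⋃_{n∈ℕ} Σ_{k=1}^n (B^{q_k}_{ε·2^{-k}}(0) ∩ 2^{-k}U_k) is a convex open 0-neighbourhood in E, and Σ_{k=1}^n 2^{-k}U_k ⊆ U_n for each n. -/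

import Mathlib

/-!
With `W_k = B^{q_k}_{ε 2^{-k}}(0) ∩ 2^{-k} U_k`, convexity and containing `0` pass to the
increasing partial sums `S n = Σ_{k=1}^n ι_k(W_k)` and hence to their union `V`. For openness it
suffices, by the finest locally convex topology, that every `ι_m⁻¹(V)` is open; since the `S n`
increase, `ι_m⁻¹(V)` is the union of the `ι_m⁻¹(S (n+1))` with `n ≥ m`, which are pulled back
along continuous transition maps from `ι_{n+1}⁻¹(S (n+1)) = ι_{n+1}⁻¹(S n) + W_{n+1}`, open
because `W_{n+1}` is. The inclusion is convexity: `Σ_k 2^{-k} U_k ⊆ (Σ_k 2^{-k}) U_n ⊆ U_n`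
as `Σ_{k=1}^n 2^{-k} < 1`.
-/

open Set Pointwise

theorem Set.finsetSum_subset_finsetSum_of_zero_mem {ι M : Type*} [AddCommMonoid M]
    [DecidableEq ι] {s t : Finset ι} (hst : s ⊆ t) {A : ι → Set M}
    (hA : ∀ i ∈ t \ s, (0 : M) ∈ A i) : ∑ i ∈ s, A i ⊆ ∑ i ∈ t, A i := by
  rw [← Finset.sum_sdiff hst]
  refine subset_add_right _ ?_
  simpa using finsetSum_mem_finsetSum (t \ s) A 0 hA

theorem monotone_sum_Icc_of_zero_mem {M : Type*} [AddCommMonoid M] {A : ℕ → Set M}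
    (hA : ∀ k, (0 : M) ∈ A k) : Monotone fun n => ∑ k ∈ Finset.Icc 1 n, A k :=
  fun _ _ hmn => finsetSum_subset_finsetSum_of_zero_mem
    (Finset.Icc_subset_Icc_right hmn) fun k _ => hA k

theorem Convex.sum_smul_subset_smul {ι 𝕜 M : Type*} [Field 𝕜] [LinearOrder 𝕜]
    [IsStrictOrderedRing 𝕜] [AddCommGroup M] [Module 𝕜 M] {B : Set M} (hB : Convex 𝕜 B)
    (hBne : B.Nonempty) {s : Finset ι} {A : ι → Set M} (hA : ∀ i ∈ s, A i ⊆ B) {c : ι → 𝕜}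
    (hc : ∀ i ∈ s, 0 ≤ c i) : ∑ i ∈ s, c i • A i ⊆ (∑ i ∈ s, c i) • B := by
  classical
  induction s using Finset.induction_on with
  | empty => simp [zero_smul_set hBne]
  | insert a s ha ih =>
    simp only [Finset.mem_insert, forall_eq_or_imp] at hA hc
    rw [Finset.sum_insert ha, Finset.sum_insert ha, hB.add_smul hc.1 (Finset.sum_nonneg hc.2)]
    exact add_subset_add (smul_set_mono hA.1) (ih hA.2 hc.2)

theorem Convex.smul_set_subset_of_zero_mem {𝕜 M : Type*} [Field 𝕜] [LinearOrder 𝕜]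
    [IsStrictOrderedRing 𝕜] [AddCommGroup M] [Module 𝕜 M] {B : Set M} (hB : Convex 𝕜 B)
    (h0 : (0 : M) ∈ B) {t : 𝕜} (ht : t ∈ Icc 0 1) : t • B ⊆ B := by
  rintro _ ⟨x, hx, rfl⟩
  exact hB.smul_mem_of_zero_mem h0 hx ht

theorem sum_Icc_inv_two_pow (n : ℕ) :
    ∑ k ∈ Finset.Icc 1 n, ((2 : ℝ) ^ k)⁻¹ = 1 - ((2 : ℝ) ^ n)⁻¹ := by
  induction n with
  | zero => simp
  | succ n ih =>
    rw [Finset.sum_Icc_succ_top (by omega), ih, pow_succ]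
    ring

theorem sum_Icc_inv_two_pow_smul_subset {M : Type*} [AddCommGroup M] [Module ℝ M]
    {A : ℕ → Set M} (hA : Monotone A) {n : ℕ} (hAc : Convex ℝ (A n)) (hA0 : (0 : M) ∈ A n) :
    ∑ k ∈ Finset.Icc 1 n, ((2 : ℝ) ^ k)⁻¹ • A k ⊆ A n := by
  have hinv : ((2 : ℝ) ^ n)⁻¹ ∈ Icc 0 1 :=
    ⟨by positivity, inv_le_one_of_one_le₀ (one_le_pow₀ one_le_two)⟩
  refine (hAc.sum_smul_subset_smul ⟨0, hA0⟩ (fun k hk => hA (Finset.mem_Icc.1 hk).2)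
    fun k _ => by positivity).trans (hAc.smul_set_subset_of_zero_mem hA0 ?_)
  rw [sum_Icc_inv_two_pow]
  exact ⟨sub_nonneg.2 hinv.2, sub_le_self _ hinv.1⟩

theorem convex_iUnion_sum_Icc {𝕜 M : Type*} [Semiring 𝕜] [PartialOrder 𝕜] [AddCommMonoid M]
    [Module 𝕜 M] {A : ℕ → Set M} (hA0 : ∀ k, (0 : M) ∈ A k) (hAc : ∀ k, Convex 𝕜 (A k)) :
    Convex 𝕜 (⋃ n, ∑ k ∈ Finset.Icc 1 n, A k) :=
  (monotone_sum_Icc_of_zero_mem hA0).directed_le.convex_iUnion fun _ =>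
    convex_sum _ fun k _ => hAc k

theorem isOpen_preimage_add_image {G H F : Type*} [AddGroup G] [TopologicalSpace G]
    [IsTopologicalAddGroup G] [AddGroup H] [FunLike F G H] [AddMonoidHomClass F G H] (φ : F)
    (A : Set H) {W : Set G} (hW : IsOpen W) : IsOpen (φ ⁻¹' (A + φ '' W)) := by
  convert hW.add_left (s := φ ⁻¹' A) using 1
  ext x
  constructor
  · rintro ⟨a, ha, _, ⟨w, hw, rfl⟩, hx⟩
    refine ⟨x - w, ?_, w, hw, sub_add_cancel x w⟩
    simp only [mem_preimage, map_sub, ← hx, add_sub_cancel_right, ha]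
  · rintro ⟨y, hy, w, hw, rfl⟩
    exact ⟨φ y, hy, φ w, mem_image_of_mem φ hw, (map_add φ y w).symm⟩

section DirectSequence

variable {R : Type*} [Semiring R] {E : ℕ → Type*} [∀ n, AddCommMonoid (E n)]
  [∀ n, Module R (E n)] [∀ n, TopologicalSpace (E n)] {M : Type*} [AddCommMonoid M]
  [Module R M] (ι : ∀ n, E n →ₗ[R] M)

theorem exists_continuous_transition
    (hstep : ∀ n, ∃ j : E n →ₗ[R] E (n + 1), Continuous j ∧ ∀ x, ι (n + 1) (j x) = ι n x)
    {m n : ℕ} (hmn : m ≤ n) :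
    ∃ J : E m →ₗ[R] E n, Continuous J ∧ ∀ x, ι n (J x) = ι m x := by
  induction hmn with
  | refl => exact ⟨LinearMap.id, continuous_id, fun _ => rfl⟩
  | @step n _ ih =>
    obtain ⟨J, hJc, hJι⟩ := ih
    obtain ⟨j, hjc, hjι⟩ := hstep n
    exact ⟨j ∘ₗ J, hjc.comp hJc, fun x => by rw [LinearMap.comp_apply, hjι, hJι]⟩

theorem isOpen_preimage_iUnion_of_monotone
    (hstep : ∀ n, ∃ j : E n →ₗ[R] E (n + 1), Continuous j ∧ ∀ x, ι (n + 1) (j x) = ι n x)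
    {S : ℕ → Set M} (hS : Monotone S)
    (hSo : ∀ n, IsOpen (ι (n + 1) ⁻¹' S (n + 1))) (m : ℕ) :
    IsOpen (ι m ⁻¹' ⋃ n, S n) := by
  rw [← hS.iUnion_nat_add (m + 1), preimage_iUnion]
  refine isOpen_iUnion fun n => ?_
  obtain ⟨J, hJc, hJι⟩ := exists_continuous_transition ι hstep (by omega : m ≤ n + (m + 1))
  have hpre : ι m ⁻¹' S (n + (m + 1)) = J ⁻¹' (ι (n + (m + 1)) ⁻¹' S (n + (m + 1))) := by
    ext x
    simp only [mem_preimage, hJι]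
  rw [hpre]
  exact (hSo (n + m)).preimage hJc

end DirectSequence

theorem isOpen_preimage_iUnion_sum_Icc_image {R : Type*} [Semiring R] {E : ℕ → Type*}
    [∀ n, AddCommGroup (E n)] [∀ n, Module R (E n)] [∀ n, TopologicalSpace (E n)]
    [∀ n, IsTopologicalAddGroup (E n)] {M : Type*} [AddCommGroup M] [Module R M]
    (ι : ∀ n, E n →ₗ[R] M)
    (hstep : ∀ n, ∃ j : E n →ₗ[R] E (n + 1), Continuous j ∧ ∀ x, ι (n + 1) (j x) = ι n x)
    {W : ∀ k, Set (E k)} (hW0 : ∀ k, (0 : E k) ∈ W k) (hWo : ∀ k, IsOpen (W k)) (m : ℕ) :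
    IsOpen (ι m ⁻¹' ⋃ n, ∑ k ∈ Finset.Icc 1 n, ι k '' W k) := by
  have hmono : Monotone fun n => ∑ k ∈ Finset.Icc 1 n, ι k '' W k :=
    monotone_sum_Icc_of_zero_mem fun k => ⟨0, hW0 k, map_zero _⟩
  refine isOpen_preimage_iUnion_of_monotone ι hstep hmono (fun n => ?_) m
  rw [Finset.sum_Icc_succ_top (Nat.le_add_left 1 n)]
  exact isOpen_preimage_add_image (ι (n + 1)) _ (hWo (n + 1))

theorem directLimit_sum_neighbourhood
    {E : ℕ → Type*} [∀ n, AddCommGroup (E n)] [∀ n, Module ℝ (E n)]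
    [∀ n, TopologicalSpace (E n)] [∀ n, IsTopologicalAddGroup (E n)]
    [∀ n, ContinuousSMul ℝ (E n)]
    {EL : Type*} [AddCommGroup EL] [Module ℝ EL] [TopologicalSpace EL]
    (ι : ∀ n, E n →ₗ[ℝ] EL)
    (hstep : ∀ n, ∃ j : E n →ₗ[ℝ] E (n + 1), Continuous j ∧ ∀ x, ι (n + 1) (j x) = ι n x)
    (hfinest : ∀ W : Set EL, Convex ℝ W → (∀ n, IsOpen (ι n ⁻¹' W)) → IsOpen W)
    (Un : ∀ n, Set (E n)) (hUo : ∀ n, IsOpen (Un n)) (hUc : ∀ n, Convex ℝ (Un n))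
    (hU0 : ∀ n, (0 : E n) ∈ Un n)
    (hUincr : ∀ n, ι n '' Un n ⊆ ι (n + 1) '' Un (n + 1))
    (ε : ℝ) (hε : 0 < ε)
    (q : ∀ n, Seminorm ℝ (E n)) (hq : ∀ n, Continuous (q n))
    (V : Set EL)
    (hV : V = ⋃ n, ∑ k ∈ Finset.Icc 1 n,
        ι k '' ((q k).ball 0 (ε / 2 ^ k) ∩ ((2 : ℝ) ^ k)⁻¹ • Un k)) :
    (0 : EL) ∈ V ∧ Convex ℝ V ∧ IsOpen V ∧
      ∀ n, (∑ k ∈ Finset.Icc 1 n, ι k '' (((2 : ℝ) ^ k)⁻¹ • Un k)) ⊆ ι n '' Un n := by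
  have hW0 (k : ℕ) : (0 : E k) ∈ (q k).ball 0 (ε / 2 ^ k) ∩ ((2 : ℝ) ^ k)⁻¹ • Un k :=
    ⟨(q k).mem_ball_self (by positivity), zero_mem_smul_set (hU0 k)⟩
  have hWo (k : ℕ) : IsOpen ((q k).ball 0 (ε / 2 ^ k) ∩ ((2 : ℝ) ^ k)⁻¹ • Un k) := by
    refine IsOpen.inter ?_ ((hUo k).smul₀ (by positivity))
    rw [Seminorm.ball_zero_eq]
    exact isOpen_lt (hq k) continuous_const
  have hVc : Convex ℝ V := hV ▸ convex_iUnion_sum_Icc (fun k => ⟨0, hW0 k, map_zero _⟩)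
    fun k => (((q k).convex_ball 0 _).inter ((hUc k).smul _)).linear_image (ι k)
  refine ⟨hV ▸ mem_iUnion.2 ⟨0, by simp⟩, hVc,
    hfinest V hVc (hV ▸ isOpen_preimage_iUnion_sum_Icc_image ι hstep hW0 hWo), fun n => ?_⟩
  simp only [image_smul_set]
  exact sum_Icc_inv_two_pow_smul_subset (monotone_nat_of_le_succ hUincr)
    ((hUc n).linear_image (ι n)) ⟨0, hU0 n, map_zero _⟩
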